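/- The function H_l is strictly decreasing on [1, Ψ(f₀)) and strictly increasing on (Ψ(f₀), ∞). -/

import Mathlib

/-!
With `L = log y`, the derivative of `√y · (A + c L²)` is `(c L² + 4 c L + A) / (2 √y)`.
For the coefficients of `H_l` one has `A = 4c(1 - s²)` with `s = √((αδ + λ)/(αδ − λ))`, so the
numerator factors as `c (L + 2 - 2s)(L + 2 + 2s)` and `H_l` has its critical points at
`y = exp(-2 ± 2s)`. The larger one is exactly `Ψ(f₀) = exp(2s - 2)`, and the smaller one
is `≤ 1`, so `[1, Ψ(f₀))` lies in the range where the derivative is negative.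
-/

open Real Set

noncomputable def sqrtMulLogSq (A c y : ℝ) : ℝ := √y * (A + c * log y ^ 2)

namespace sqrtMulLogSq

variable {A c s : ℝ}

theorem hasDerivAt {y : ℝ} (hy : 0 < y) :
    HasDerivAt (sqrtMulLogSq A c) ((c * log y ^ 2 + 4 * c * log y + A) / (2 * √y)) y := by
  have hderiv := (hasDerivAt_sqrt hy.ne').fun_mul
    ((((hasDerivAt_log hy.ne').fun_pow 2).const_mul c).const_add A)
  refine hderiv.congr_deriv ?_
  have hsqrt : √y ≠ 0 := (sqrt_pos.mpr hy).ne'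
  field_simp
  rw [sq_sqrt hy.le]
  ring

theorem continuousOn {D : Set ℝ} (hD : D ⊆ Ioi 0) : ContinuousOn (sqrtMulLogSq A c) D :=
  continuous_sqrt.continuousOn.mul <| continuousOn_const.add <|
    continuousOn_const.mul <| (continuousOn_log.mono fun _ hx => (hD hx).ne').pow 2

theorem deriv_eq_mul_mul (hA : A = 4 * c * (1 - s ^ 2)) {y : ℝ} (hy : 0 < y) :
    deriv (sqrtMulLogSq A c) y =
      c * ((log y + 2 - 2 * s) * (log y + 2 + 2 * s)) / (2 * √y) := by
  rw [(hasDerivAt hy).deriv, hA]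
  ring

theorem strictAntiOn (hc : 0 < c) (hA : A = 4 * c * (1 - s ^ 2)) :
    StrictAntiOn (sqrtMulLogSq A c) (Icc (exp (-2 - 2 * s)) (exp (2 * s - 2))) := by
  refine strictAntiOn_of_deriv_neg (convex_Icc _ _)
    (continuousOn fun y hy => (exp_pos _).trans_le hy.1) fun y hy => ?_
  rw [interior_Icc] at hy
  have hy₀ : 0 < y := (exp_pos _).trans hy.1
  have hlow : -2 - 2 * s < log y := (lt_log_iff_exp_lt hy₀).mpr hy.1
  have hhigh : log y < 2 * s - 2 := (log_lt_iff_lt_exp hy₀).mpr hy.2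
  rw [deriv_eq_mul_mul hA hy₀]
  refine div_neg_of_neg_of_pos (mul_neg_of_pos_of_neg hc ?_) (by positivity)
  exact mul_neg_of_neg_of_pos (by linarith) (by linarith)

theorem strictMonoOn (hc : 0 < c) (hs : 0 ≤ s) (hA : A = 4 * c * (1 - s ^ 2)) :
    StrictMonoOn (sqrtMulLogSq A c) (Ici (exp (2 * s - 2))) := by
  refine strictMonoOn_of_deriv_pos (convex_Ici _)
    (continuousOn fun y hy => (exp_pos _).trans_le hy) fun y hy => ?_
  rw [interior_Ici] at hy
  have hy₀ : 0 < y := (exp_pos _).trans hy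
  have hlow : 2 * s - 2 < log y := (lt_log_iff_exp_lt hy₀).mpr hy
  rw [deriv_eq_mul_mul hA hy₀]
  exact div_pos (mul_pos hc (mul_pos (by linarith) (by linarith))) (by positivity)

end sqrtMulLogSq

theorem stmt_2_general (α δ lam : ℝ) (hα : 0 < α) (hlam : 0 < lam)
    (hltd : lam < α * δ)
    (f₀ : ℝ)
    (hf₀ : f₀ = (1 / Real.sqrt (2 * α)) * (Real.sqrt ((α * δ + lam) / (α * δ - lam)) - 1))
    (Ψ : ℝ → ℝ) (hΨ : ∀ x, Ψ x = Real.exp (2 * Real.sqrt (2 * α) * x))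
    (Hl : ℝ → ℝ)
    (hHl : ∀ y, 0 < y → Hl y = Real.sqrt y *
      (-(lam / α ^ 2) + ((δ - lam / α) / (8 * α)) * (Real.log y) ^ 2)) :
    StrictAntiOn Hl (Set.Ico 1 (Ψ f₀)) ∧ StrictMonoOn Hl (Set.Ioi (Ψ f₀)) := by
  set c := (δ - lam / α) / (8 * α)
  set s := √((α * δ + lam) / (α * δ - lam))
  have hgap : 0 < α * δ - lam := by linarith
  have hc : 0 < c := div_pos (by rw [sub_pos, div_lt_iff₀ hα]; linarith) (by positivity)
  have hs_sq : s ^ 2 = (α * δ + lam) / (α * δ - lam) := sq_sqrt (div_pos (by linarith) hgap).le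
  have hA : -(lam / α ^ 2) = 4 * c * (1 - s ^ 2) := by
    rw [hs_sq]
    simp only [c]
    field_simp
    ring
  have hΨf₀ : Ψ f₀ = exp (2 * s - 2) := by
    rw [hΨ, hf₀]
    congr 1
    field_simp
  have hEq : EqOn (sqrtMulLogSq (-(lam / α ^ 2)) c) Hl (Ioi 0) := fun y hy => (hHl y hy).symm
  have hs : 0 ≤ s := sqrt_nonneg _
  have hone : exp (-2 - 2 * s) ≤ 1 := exp_le_one_iff.mpr (by linarith)
  rw [hΨf₀]
  constructor
  · exact ((sqrtMulLogSq.strictAntiOn hc hA).mono fun y hy => ⟨hone.trans hy.1, hy.2.le⟩).congr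
      (hEq.mono fun y hy => zero_lt_one.trans_le hy.1)
  · exact ((sqrtMulLogSq.strictMonoOn hc hs hA).mono Ioi_subset_Ici_self).congr
      (hEq.mono fun y hy => (exp_pos _).trans hy)

/-- H_l is strictly decreasing on [1, Ψ(f₀)) and strictly increasing on
(Ψ(f₀), ∞). -/
theorem stmt_2 (α δ lam : ℝ) (hα : 0 < α) (hδ : 0 < δ) (hlam : 0 < lam)
    (hltd : lam < α * δ)
    (f₀ : ℝ)
    (hf₀ : f₀ = (1 / Real.sqrt (2 * α)) * (Real.sqrt ((α * δ + lam) / (α * δ - lam)) - 1))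
    (Ψ : ℝ → ℝ) (hΨ : ∀ x, Ψ x = Real.exp (2 * Real.sqrt (2 * α) * x))
    (Hl : ℝ → ℝ)
    (hHl : ∀ y, 0 < y → Hl y = Real.sqrt y *
      (-(lam / α ^ 2) + ((δ - lam / α) / (8 * α)) * (Real.log y) ^ 2))
    (hHl0 : Hl 0 = 0) :
    StrictAntiOn Hl (Set.Ico 1 (Ψ f₀)) ∧ StrictMonoOn Hl (Set.Ioi (Ψ f₀)) :=
  stmt_2_general α δ lam hα hlam hltd f₀ hf₀ Ψ hΨ Hl hHl
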